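/- arXiv:2311.01608 — 3 statements merged into one kernel-verified Lean document; each statement's English description precedes it below -/
import Mathlib

section
/- Let p ≤ 3 and q be distinct primes. There is no subset J ⊆ Z/(pq) with 0 ∈ J, -J ⊆ J, such that: J mod q is invariant under translation by 1, J mod p is not invariant under translation by 1, and J is not invariant under translation by p. -/
/-!
Since `1` generates `ℤ/q`, the translation-invariant set `J mod q` is everything. For `p ≤ 3`,
a symmetric subset of `ℤ/p` containing `0` is `{0}` or everything, and the latter is excluded
because `J mod p` is not translation-invariant; so `J` lies in the kernel of reduction mod `p`.
By the Chinese remainder theorem that kernel maps bijectively onto `ℤ/q`, hence `J` is the whole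
kernel, which is invariant under translation by `p`.
-/

open Set

theorem add_zsmul_mem_of_image_add_eq {G : Type*} [AddGroup G] {S : Set G} {g : G}
    (h : (· + g) '' S = S) {a : G} (ha : a ∈ S) (k : ℤ) : a + k • g ∈ S := by
  have hadd : ∀ x ∈ S, x + g ∈ S := fun x hx => h ▸ mem_image_of_mem _ hx
  have hsub : ∀ x ∈ S, x - g ∈ S := fun x hx => by
    rw [← h] at hx
    obtain ⟨y, hy, rfl⟩ := hx
    simpa using hy
  induction k using Int.induction_on with
  | zero => simpa using ha
  | succ k ih => simpa [add_zsmul, add_assoc] using hadd _ ih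
  | pred k ih =>
    convert hsub _ ih using 1
    rw [sub_zsmul, one_zsmul, add_sub_assoc, sub_eq_add_neg]

namespace ZMod

theorem eq_univ_of_image_add_one_eq {n : ℕ} {S : Set (ZMod n)} (hS : S.Nonempty)
    (h : (· + 1) '' S = S) : S = univ := by
  obtain ⟨a, ha⟩ := hS
  refine eq_univ_of_forall fun x => ?_
  obtain ⟨k, hk⟩ := intCast_surjective (x - a)
  simpa [hk] using add_zsmul_mem_of_image_add_eq h ha k

theorem eq_zero_or_eq_or_eq_neg {n : ℕ} [NeZero n] (hn : n ≤ 3) {x : ZMod n} (hx : x ≠ 0)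
    (y : ZMod n) : y = 0 ∨ y = x ∨ y = -x := by
  interval_cases n
  · exact absurd rfl (NeZero.ne 0)
  all_goals revert x y; decide

theorem eq_singleton_zero_or_eq_univ {n : ℕ} [NeZero n] (hn : n ≤ 3) {S : Set (ZMod n)}
    (h0 : (0 : ZMod n) ∈ S) (hneg : ∀ x ∈ S, -x ∈ S) : S = {0} ∨ S = univ := by
  by_cases hS : ∀ x ∈ S, x = 0
  · exact Or.inl (eq_singleton_iff_unique_mem.2 ⟨h0, hS⟩)
  · push Not at hS
    obtain ⟨x, hxS, hx⟩ := hS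
    refine Or.inr (eq_univ_of_forall fun y => ?_)
    rcases eq_zero_or_eq_or_eq_neg hn hx y with rfl | rfl | rfl
    exacts [h0, hxS, hneg x hxS]

theorem eq_zero_of_castHom_eq_zero {p q : ℕ} (h : p.Coprime q) {x : ZMod (p * q)}
    (hp : castHom (dvd_mul_right p q) (ZMod p) x = 0)
    (hq : castHom (dvd_mul_left q p) (ZMod q) x = 0) : x = 0 := by
  obtain ⟨k, rfl⟩ := intCast_surjective x
  rw [map_intCast, intCast_zmod_eq_zero_iff_dvd] at hp hq
  rw [intCast_zmod_eq_zero_iff_dvd, Nat.cast_mul]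
  exact (Nat.isCoprime_iff_coprime.2 h).mul_dvd hp hq

theorem eq_setOf_castHom_eq_zero {p q : ℕ} (h : p.Coprime q) {J : Set (ZMod (p * q))}
    (hp : ∀ x ∈ J, castHom (dvd_mul_right p q) (ZMod p) x = 0)
    (hq : castHom (dvd_mul_left q p) (ZMod q) '' J = univ) :
    J = {x | castHom (dvd_mul_right p q) (ZMod p) x = 0} := by
  refine Subset.antisymm hp fun x hx => ?_
  obtain ⟨y, hy, hyx⟩ : castHom (dvd_mul_left q p) (ZMod q) x ∈ _ '' J := hq ▸ mem_univ _
  have hxy : y - x = 0 :=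
    eq_zero_of_castHom_eq_zero h (by rw [map_sub, hp y hy, mem_ofPred.1 hx, sub_self])
      (by rw [map_sub, hyx, sub_self])
  rwa [← sub_eq_zero.1 hxy]

end ZMod

/-- Remark 3.9: for `p ≤ 3`, there is no indexing set `J ⊆ Z/pq`
realizing the saturated transfer system with unique non-trivial relation
`{0} → C_q`. -/
theorem stmt5 (p q : ℕ) (hp : p.Prime) (hq : q.Prime) (hp3 : p ≤ 3) (hpq : p ≠ q) :
    ¬ ∃ J : Set (ZMod (p * q)),
      (0 : ZMod (p * q)) ∈ J ∧
      (∀ x ∈ J, -x ∈ J) ∧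
      (fun x => x + 1) '' ((ZMod.castHom (dvd_mul_left q p) (ZMod q)) '' J)
        = (ZMod.castHom (dvd_mul_left q p) (ZMod q)) '' J ∧
      ¬ ((fun x => x + 1) '' ((ZMod.castHom (dvd_mul_right p q) (ZMod p)) '' J)
        = (ZMod.castHom (dvd_mul_right p q) (ZMod p)) '' J) ∧
      ¬ ((fun x => x + ((p : ℕ) : ZMod (p * q))) '' J = J) := by
  rintro ⟨J, h0, hneg, hJq, hJp, hJ⟩
  set πp := ZMod.castHom (dvd_mul_right p q) (ZMod p)
  set πq := ZMod.castHom (dvd_mul_left q p) (ZMod q)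
  have : NeZero p := ⟨hp.ne_zero⟩
  have hJq_univ : πq '' J = univ :=
    ZMod.eq_univ_of_image_add_one_eq ((nonempty_of_mem h0).image πq) hJq
  have hJp_zero_mem : (0 : ZMod p) ∈ πp '' J := ⟨0, h0, map_zero πp⟩
  have hJp_neg : ∀ y ∈ πp '' J, -y ∈ πp '' J := by
    rintro _ ⟨x, hx, rfl⟩
    exact ⟨-x, hneg x hx, map_neg πp x⟩
  have hJp_zero : πp '' J = {0} := by
    refine (ZMod.eq_singleton_zero_or_eq_univ hp3 hJp_zero_mem hJp_neg).resolve_right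
      fun huniv => hJp ?_
    rw [huniv, image_univ_of_surjective (add_right_surjective 1)]
  have hJ_ker : J = {x | πp x = 0} :=
    ZMod.eq_setOf_castHom_eq_zero ((Nat.coprime_primes hp hq).2 hpq)
      (fun x hx => (eq_singleton_iff_unique_mem.1 hJp_zero).2 _ (mem_image_of_mem πp hx))
      hJq_univ
  apply hJ
  rw [hJ_ker, image_add_right]
  ext x
  simp [πp]
end

section
/- Let p, q ≥ 5 be distinct primes with q > p, and n ≥ 1, m ≥ 0. Let L ⊆ {0,...,p^(n-1)q^m - 1} with 0 ∈ L and L closed under negation modulo p^(n-1)q^m. Define K = { ±(ℓ + k p^(n-1) q^m) mod p^n q^(m+1) : ℓ ∈ L, 0 ≤ k < 2q }. Then 2 p^(n-1) q^(m+1) ∉ K. -/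
/-- case (IV)(a) of Lemma 4.3: `2 p^(n-1) q^(m+1)` does not
belong to the constructed indexing set `K`. -/
theorem stmt6 (p q n m : ℕ) (hp : p.Prime) (hq : q.Prime) (hp5 : 5 ≤ p)
    (hq5 : 5 ≤ q) (hpq : p < q) (hn : 1 ≤ n)
    (L : Set ℕ) (hLb : ∀ ℓ ∈ L, ℓ < p ^ (n - 1) * q ^ m) (hL0 : 0 ∈ L)
    (hLneg : ∀ ℓ ∈ L, ∀ ℓ' : ℕ,
      ((ℓ' : ZMod (p ^ (n - 1) * q ^ m)) = -(ℓ : ZMod (p ^ (n - 1) * q ^ m)) ∧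
        ℓ' < p ^ (n - 1) * q ^ m) → ℓ' ∈ L)
    (K : Set (ZMod (p ^ n * q ^ (m + 1))))
    (hK : K = {x | ∃ ℓ ∈ L, ∃ k < 2 * q,
      x = ((ℓ + k * (p ^ (n - 1) * q ^ m) : ℕ) : ZMod (p ^ n * q ^ (m + 1))) ∨
      x = -((ℓ + k * (p ^ (n - 1) * q ^ m) : ℕ) : ZMod (p ^ n * q ^ (m + 1)))}) :
    ((2 * (p ^ (n - 1) * q ^ (m + 1)) : ℕ) : ZMod (p ^ n * q ^ (m + 1))) ∉ K := by
  subst hK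
  set P := p ^ (n - 1) * q ^ m with hPdef
  set N := p ^ n * q ^ (m + 1) with hNdef
  have hP : 0 < P := Nat.mul_pos (Nat.pow_pos hp.pos) (Nat.pow_pos hq.pos)
  have hNP : N = p * (q * P) := by
    have hpn : p ^ n = p ^ (n - 1) * p := by
      rw [← pow_succ]; congr 1; omega
    rw [hNdef, hPdef, hpn, pow_succ]; ring
  have hT : 2 * (p ^ (n - 1) * q ^ (m + 1)) = 2 * (q * P) := by
    rw [hPdef, pow_succ]; ring
  have hqP : 0 < q * P := Nat.mul_pos hq.pos hP
  have h5 : 5 * (q * P) ≤ p * (q * P) := Nat.mul_le_mul_right _ hp5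
  have hNpos : 0 < N := by rw [hNP]; positivity
  haveI : NeZero N := ⟨hNpos.ne'⟩
  rintro ⟨ℓ, hℓ, k, hk, h | h⟩ <;>
  · have h1 : ℓ < P := hLb ℓ hℓ
    have h2 : (k + 1) * P ≤ (2 * q) * P := Nat.mul_le_mul_right _ (by omega)
    rw [add_mul, one_mul] at h2
    have h3 : (2 * q) * P = 2 * (q * P) := by ring
    have he : ℓ + k * P < 2 * (q * P) := by omega
    have hTN : 2 * (q * P) < N := by rw [hNP]; omega
    have hsum : 2 * (q * P) + (ℓ + k * P) < N := by rw [hNP]; omega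
    rw [hT] at h
    first
    | -- positive case
      (have hv1 := ZMod.val_cast_of_lt (n := N) hTN
       have hv2 := ZMod.val_cast_of_lt (n := N) (lt_trans he hTN)
       rw [h] at hv1
       omega)
    | -- negative case
      (have hz : ((2 * (q * P) + (ℓ + k * P) : ℕ) : ZMod N) = 0 := by
         push_cast
         push_cast at h
         linear_combination h
       have hdvd : N ∣ 2 * (q * P) + (ℓ + k * P) :=
         (ZMod.natCast_eq_zero_iff _ _).mp hz
       have := Nat.le_of_dvd (by omega) hdvd
       omega)
end

section
/- Let p, q ≥ 5 be distinct primes with q > p, and n ≥ 1, m ≥ 0. Let L ⊆ Z/(p^(n-1)q^m) with 0 ∈ L and -L ⊆ L. Define K = { ±(ℓ + k p^(n-1) q^m) : ℓ ∈ L (lifted to {0,...,p^(n-1)q^m - 1}), 0 ≤ k < 2q } ⊆ Z/(p^n q^(m+1)). Then the image K mod p^(n-1)q^(m+1) is invariant under translation by p^(n-1)q^m, and the image K mod p^n q^m is invariant under translation by p^(n-1)q^m. -/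
/-!
Write `t = p^(n-1) q^m`. Both reductions of `K` have the shape `±(A + {0, …, 2q-1}·t)`, and in
them `t` is killed by `q` (modulo `p^(n-1) q^(m+1)`) resp. by `p` (modulo `p^n q^m`). Since `p` and
`q` are at most `2q`, the multiples `k t` with `k < 2q` are then all the multiples of `t`, so each
reduction is `±(A + ℤ t)`, which is visibly invariant under translation by `t`.
-/

open Set

section

variable {G : Type*} [AddCommGroup G]

def plusMinusProgression (A : Set G) (t : G) (N : ℕ) : Set G :=
  {x | ∃ a ∈ A, ∃ k < N, x = a + k • t ∨ x = -(a + k • t)}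

def plusMinusIntProgression (A : Set G) (t : G) : Set G :=
  {x | ∃ a ∈ A, ∃ j : ℤ, x = a + j • t ∨ x = -(a + j • t)}

lemma image_add_plusMinusIntProgression (A : Set G) (t : G) :
    (· + t) '' plusMinusIntProgression A t = plusMinusIntProgression A t := by
  have add_zsmul_mem : ∀ s : ℤ, ∀ x ∈ plusMinusIntProgression A t,
      x + s • t ∈ plusMinusIntProgression A t := by
    rintro s x ⟨a, ha, j, rfl | rfl⟩
    · exact ⟨a, ha, j + s, Or.inl (by rw [add_zsmul, add_assoc])⟩
    · exact ⟨a, ha, j - s, Or.inr (by rw [sub_zsmul]; abel)⟩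
  refine Subset.antisymm ?_ fun x hx => ⟨x - t, ?_, sub_add_cancel x t⟩
  · rintro _ ⟨x, hx, rfl⟩
    simpa using add_zsmul_mem 1 x hx
  · simpa [sub_eq_add_neg] using add_zsmul_mem (-1) x hx

lemma plusMinusProgression_eq_plusMinusIntProgression {A : Set G} {t : G} {N e : ℕ}
    (he : 0 < e) (heN : e ≤ N) (het : e • t = 0) :
    plusMinusProgression A t N = plusMinusIntProgression A t := by
  refine Subset.antisymm (fun x ⟨a, ha, k, _, hx⟩ => ⟨a, ha, k, by simpa using hx⟩) ?_
  rintro x ⟨a, ha, j, hx⟩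
  have hj : j • t = (j % e).toNat • t := by
    rw [← natCast_zsmul, Int.toNat_of_nonneg (Int.emod_nonneg j (by omega))]
    conv_lhs => rw [← Int.emod_add_mul_ediv j e]
    rw [add_zsmul, mul_comm, mul_zsmul, natCast_zsmul, het, zsmul_zero, add_zero]
  refine ⟨a, ha, (j % e).toNat, ?_, hj ▸ hx⟩
  have := Int.emod_lt_of_pos j (Int.natCast_pos.2 he)
  omega

lemma image_plusMinusProgression {H F : Type*} [AddCommGroup H] [FunLike F G H]
    [AddMonoidHomClass F G H] (f : F) (A : Set G) (t : G) (N : ℕ) :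
    f '' plusMinusProgression A t N = plusMinusProgression (f '' A) (f t) N := by
  ext y
  constructor
  · rintro ⟨x, ⟨a, ha, k, hk, rfl | rfl⟩, rfl⟩
    · exact ⟨f a, mem_image_of_mem f ha, k, hk, Or.inl (by simp)⟩
    · exact ⟨f a, mem_image_of_mem f ha, k, hk, Or.inr (by simp)⟩
  · rintro ⟨_, ⟨a, ha, rfl⟩, k, hk, rfl | rfl⟩
    · exact ⟨a + k • t, ⟨a, ha, k, hk, Or.inl rfl⟩, by simp⟩
    · exact ⟨-(a + k • t), ⟨a, ha, k, hk, Or.inr rfl⟩, by simp⟩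

lemma image_add_plusMinusProgression {A : Set G} {t : G} {N e : ℕ}
    (he : 0 < e) (heN : e ≤ N) (het : e • t = 0) :
    (· + t) '' plusMinusProgression A t N = plusMinusProgression A t N := by
  rw [plusMinusProgression_eq_plusMinusIntProgression he heN het,
    image_add_plusMinusIntProgression]

end

lemma nsmul_natCast_eq_zero_of_mul_eq {e t d : ℕ} (h : e * t = d) : e • (t : ZMod d) = 0 := by
  rw [nsmul_eq_mul, ← Nat.cast_mul, h, ZMod.natCast_self]

theorem stmt7_general (p q n m : ℕ) (hp : p.Prime) (hq : q.Prime) (hpq : p < q) (hn : 1 ≤ n)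
    (L : Set (ZMod (p ^ (n - 1) * q ^ m)))
    (K : Set (ZMod (p ^ n * q ^ (m + 1))))
    (hK : K = {x | ∃ ℓ ∈ L, ∃ k < 2 * q,
      x = ((ℓ.val + k * (p ^ (n - 1) * q ^ m) : ℕ) : ZMod (p ^ n * q ^ (m + 1))) ∨
      x = -((ℓ.val + k * (p ^ (n - 1) * q ^ m) : ℕ) : ZMod (p ^ n * q ^ (m + 1)))}) :
    (fun x => x + ((p ^ (n - 1) * q ^ m : ℕ) : ZMod (p ^ (n - 1) * q ^ (m + 1)))) ''
        ((ZMod.castHom (mul_dvd_mul (pow_dvd_pow p (Nat.sub_le n 1)) dvd_rfl)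
          (ZMod (p ^ (n - 1) * q ^ (m + 1)))) '' K)
      = (ZMod.castHom (mul_dvd_mul (pow_dvd_pow p (Nat.sub_le n 1)) dvd_rfl)
          (ZMod (p ^ (n - 1) * q ^ (m + 1)))) '' K ∧
    (fun x => x + ((p ^ (n - 1) * q ^ m : ℕ) : ZMod (p ^ n * q ^ m))) ''
        ((ZMod.castHom (mul_dvd_mul dvd_rfl (pow_dvd_pow q (Nat.le_succ m)))
          (ZMod (p ^ n * q ^ m))) '' K)
      = (ZMod.castHom (mul_dvd_mul dvd_rfl (pow_dvd_pow q (Nat.le_succ m)))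
          (ZMod (p ^ n * q ^ m))) '' K := by
  have hK' : K = plusMinusProgression ((fun ℓ => (ℓ.val : ZMod (p ^ n * q ^ (m + 1)))) '' L)
      ((p ^ (n - 1) * q ^ m : ℕ) : ZMod (p ^ n * q ^ (m + 1))) (2 * q) := by
    subst hK
    ext x
    simp [plusMinusProgression, nsmul_eq_mul]
  rw [hK', image_plusMinusProgression, image_plusMinusProgression, map_natCast, map_natCast]
  constructor
  · refine image_add_plusMinusProgression hq.pos (by omega) (nsmul_natCast_eq_zero_of_mul_eq ?_)
    ring
  · refine image_add_plusMinusProgression hp.pos (by omega) (nsmul_natCast_eq_zero_of_mul_eq ?_)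
    rw [← mul_assoc, ← pow_succ', Nat.sub_add_cancel hn]

/-- case (IV)(a) of Lemma 4.3: the reductions of the constructed
set `K` modulo `p^(n-1) q^(m+1)` and modulo `p^n q^m` are invariant under
translation by `p^(n-1) q^m`. -/
theorem stmt7 (p q n m : ℕ) (hp : p.Prime) (hq : q.Prime) (hp5 : 5 ≤ p)
    (hq5 : 5 ≤ q) (hpq : p < q) (hn : 1 ≤ n)
    (L : Set (ZMod (p ^ (n - 1) * q ^ m))) (hL0 : (0 : ZMod (p ^ (n - 1) * q ^ m)) ∈ L)
    (hLneg : ∀ x ∈ L, -x ∈ L)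
    (K : Set (ZMod (p ^ n * q ^ (m + 1))))
    (hK : K = {x | ∃ ℓ ∈ L, ∃ k < 2 * q,
      x = ((ℓ.val + k * (p ^ (n - 1) * q ^ m) : ℕ) : ZMod (p ^ n * q ^ (m + 1))) ∨
      x = -((ℓ.val + k * (p ^ (n - 1) * q ^ m) : ℕ) : ZMod (p ^ n * q ^ (m + 1)))}) :
    (fun x => x + ((p ^ (n - 1) * q ^ m : ℕ) : ZMod (p ^ (n - 1) * q ^ (m + 1)))) ''
        ((ZMod.castHom (mul_dvd_mul (pow_dvd_pow p (Nat.sub_le n 1)) dvd_rfl)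
          (ZMod (p ^ (n - 1) * q ^ (m + 1)))) '' K)
      = (ZMod.castHom (mul_dvd_mul (pow_dvd_pow p (Nat.sub_le n 1)) dvd_rfl)
          (ZMod (p ^ (n - 1) * q ^ (m + 1)))) '' K ∧
    (fun x => x + ((p ^ (n - 1) * q ^ m : ℕ) : ZMod (p ^ n * q ^ m))) ''
        ((ZMod.castHom (mul_dvd_mul dvd_rfl (pow_dvd_pow q (Nat.le_succ m)))
          (ZMod (p ^ n * q ^ m))) '' K)
      = (ZMod.castHom (mul_dvd_mul dvd_rfl (pow_dvd_pow q (Nat.le_succ m)))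
          (ZMod (p ^ n * q ^ m))) '' K :=
  stmt7_general p q n m hp hq hpq hn L K hK
end
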